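/- arXiv:2303.07268 — 3 statements merged into one kernel-verified Lean document; each statement's English description precedes it below -/
import Mathlib

section
/- Let 0 = t₀ < t₁ < ⋯ < t_N = T be a partition of [0,T] and set h_k = t_k − t_{k−1} for k = 1,…,N. Let w, v : [0,T] → ℝ be continuous functions that are affine on each subinterval [t_{k−1}, t_k], and let Qv : [0,T] → ℝ denote the piecewise constant function whose value on (t_{k−1}, t_k) is the mean (1/h_k)∫_{t_{k−1}}^{t_k} v(s) ds. Then ∫₀ᵀ w(t)·(Qv)(t) dt = ∫₀ᵀ w(t)·v(t) dt − Σ_{k=1}^{N} (h_k²/12)·∫_{t_{k−1}}^{t_k} w′(t)·v′(t) dt, where w′, v′ denote the (piecewise constant) derivatives of w and v on the open subintervals. -/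
/-!
On one subinterval `[a, b]` with midpoint `m`, write `w = w(m) + w'·(s - m)` and
`v = v(m) + v'·(s - m)`. The mean of `v` is `v(m)`, so `∫ w·Qv = (b - a)·w(m)·v(m)`, whereas
`∫ w·v` carries the extra term `w'·v'·∫ (s - m)² = w'·v'·(b - a)³/12`. Summing over the
subintervals gives the identity.
-/

open MeasureTheory intervalIntegral Set

section AffinePiece

variable {a b c d c' d' : ℝ}

theorem integral_quadratic (p q r : ℝ) :
    ∫ s in a..b, (p + q * s + r * s ^ 2)
      = p * (b - a) + q * (b ^ 2 - a ^ 2) / 2 + r * (b ^ 3 - a ^ 3) / 3 := by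
  have hint : ∀ f : ℝ → ℝ, Continuous f → IntervalIntegrable f volume a b :=
    fun f hf => hf.intervalIntegrable a b
  rw [integral_add (hint _ (by fun_prop)) (hint _ (by fun_prop)),
    integral_add (hint _ (by fun_prop)) (hint _ (by fun_prop)),
    intervalIntegral.integral_const_mul q fun s => s]
  simp only [intervalIntegral.integral_const, intervalIntegral.integral_const_mul, integral_pow,
    integral_id, smul_eq_mul]
  ring

theorem integral_affine :
    ∫ s in a..b, (c + d * s) = (b - a) * (c + d * ((a + b) / 2)) := by
  rw [integral_congr (g := fun s => c + d * s + 0 * s ^ 2) fun s _ => by ring,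
    integral_quadratic]
  ring

theorem integral_affine_mul_affine :
    ∫ s in a..b, (c + d * s) * (c' + d' * s)
      = (b - a) * (c + d * ((a + b) / 2)) * (c' + d' * ((a + b) / 2))
        + d * d' * (b - a) ^ 3 / 12 := by
  rw [integral_congr (g := fun s => c * c' + (c * d' + d * c') * s + d * d' * s ^ 2)
    fun s _ => by ring, integral_quadratic]
  ring

theorem deriv_eqOn_of_eqOn_affine {w : ℝ → ℝ} {U : Set ℝ} (hU : IsOpen U)
    (hw : EqOn w (fun s => c + d * s) U) : EqOn (deriv w) (fun _ => d) U := fun s hs => by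
  rw [hw.deriv hU hs]
  simp

theorem integral_mul_mean_of_affine {w v q : ℝ → ℝ} (hab : a < b)
    (hw : EqOn w (fun s => c + d * s) (Ioo a b)) (hv : EqOn v (fun s => c' + d' * s) (Ioo a b))
    (hq : EqOn q (fun _ => 1 / (b - a) * ∫ r in a..b, v r) (Ioo a b)) :
    ∫ s in a..b, w s * q s
      = (∫ s in a..b, w s * v s) - (b - a) ^ 2 / 12 * ∫ s in a..b, deriv w s * deriv v s := by
  set m := (a + b) / 2
  have hmean : ∫ r in a..b, v r = (b - a) * (c' + d' * m) := by
    rw [integral_congr_Ioo_of_le hab.le hv, integral_affine]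
  have hwq : ∫ s in a..b, w s * q s = (b - a) * (c + d * m) * (c' + d' * m) := by
    rw [integral_congr_Ioo_of_le hab.le (g := fun s => (c + d * s) * (c' + d' * m)),
      intervalIntegral.integral_mul_const, integral_affine]
    intro s hs
    simp only [hw hs, hq hs, hmean]
    field_simp [(sub_pos.2 hab).ne']
  have hwv : ∫ s in a..b, w s * v s
      = (b - a) * (c + d * m) * (c' + d' * m) + d * d' * (b - a) ^ 3 / 12 := by
    rw [integral_congr_Ioo_of_le hab.le fun s hs => congrArg₂ (· * ·) (hw hs) (hv hs),
      integral_affine_mul_affine]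
  have hder : ∫ s in a..b, deriv w s * deriv v s = (b - a) * (d * d') := by
    rw [integral_congr_Ioo_of_le hab.le fun s hs => congrArg₂ (· * ·)
      (deriv_eqOn_of_eqOn_affine isOpen_Ioo hw hs) (deriv_eqOn_of_eqOn_affine isOpen_Ioo hv hs),
      intervalIntegral.integral_const, smul_eq_mul]
  rw [hwq, hwv, hder]
  ring

end AffinePiece

theorem intervalIntegrable_of_eqOn_Ioo {E : Type*} [NormedAddCommGroup E] {a b : ℝ}
    {f g : ℝ → E} (hab : a ≤ b) (hg : Continuous g) (hfg : EqOn f g (Ioo a b)) :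
    IntervalIntegrable f volume a b :=
  (hg.intervalIntegrable a b).congr_uIoo (by rw [uIoo_of_le hab]; exact hfg.symm)

theorem piecewise_affine_projection_penalty_general (T : ℝ) (N : ℕ)
    (t : ℕ → ℝ) (ht0 : t 0 = 0) (htN : t N = T)
    (hmono : ∀ k < N, t k < t (k + 1))
    (w v Qv : ℝ → ℝ)
    (hwaff : ∀ k < N, ∃ c d : ℝ, ∀ s ∈ Set.Icc (t k) (t (k + 1)), w s = c + d * s)
    (hvaff : ∀ k < N, ∃ c d : ℝ, ∀ s ∈ Set.Icc (t k) (t (k + 1)), v s = c + d * s)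
    (hQ : ∀ k < N, ∀ s ∈ Set.Ioo (t k) (t (k + 1)),
        Qv s = (1 / (t (k + 1) - t k)) * ∫ r in (t k)..(t (k + 1)), v r) :
    (∫ s in (0 : ℝ)..T, w s * Qv s)
      = (∫ s in (0 : ℝ)..T, w s * v s)
        - ∑ k ∈ Finset.range N, ((t (k + 1) - t k) ^ 2 / 12) *
            ∫ s in (t k)..(t (k + 1)), deriv w s * deriv v s := by
  have piece : ∀ k < N,
      IntervalIntegrable (fun s => w s * v s) volume (t k) (t (k + 1)) ∧
      IntervalIntegrable (fun s => w s * Qv s) volume (t k) (t (k + 1)) ∧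
      ∫ s in (t k)..(t (k + 1)), w s * Qv s
        = (∫ s in (t k)..(t (k + 1)), w s * v s) - (t (k + 1) - t k) ^ 2 / 12 *
            ∫ s in (t k)..(t (k + 1)), deriv w s * deriv v s := by
    intro k hk
    obtain ⟨c, d, hw⟩ := hwaff k hk
    obtain ⟨c', d', hv⟩ := hvaff k hk
    have hw' : EqOn w _ (Ioo (t k) (t (k + 1))) := fun s hs => hw s (Ioo_subset_Icc_self hs)
    have hv' : EqOn v _ (Ioo (t k) (t (k + 1))) := fun s hs => hv s (Ioo_subset_Icc_self hs)
    have hab := (hmono k hk).le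
    exact ⟨intervalIntegrable_of_eqOn_Ioo hab (by fun_prop)
        fun s hs => congrArg₂ (· * ·) (hw' hs) (hv' hs),
      intervalIntegrable_of_eqOn_Ioo hab (by fun_prop)
        fun s hs => congrArg₂ (· * ·) (hw' hs) (hQ k hk s hs),
      integral_mul_mean_of_affine (hmono k hk) hw' hv' (hQ k hk)⟩
  have hsum : ∀ f : ℝ → ℝ, (∀ k < N, IntervalIntegrable f volume (t k) (t (k + 1))) →
      ∑ k ∈ Finset.range N, ∫ s in (t k)..(t (k + 1)), f s = ∫ s in (0 : ℝ)..T, f s :=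
    fun f hf => by rw [sum_integral_adjacent_intervals hf, ht0, htN]
  rw [← hsum _ fun k hk => (piece k hk).1, ← hsum _ fun k hk => (piece k hk).2.1,
    ← Finset.sum_sub_distrib]
  exact Finset.sum_congr rfl fun k hk => (piece k (Finset.mem_range.1 hk)).2.2

/-- For a partition `0 = t₀ < t₁ < ⋯ < t_N = T`, continuous functions `w, v` that are affine
on each subinterval, and `Qv` the piecewise constant function equal on each open subinterval
to the mean value of `v` there:
`∫₀ᵀ w·Qv = ∫₀ᵀ w·v − Σₖ (hₖ²/12)·∫ w′·v′` with `hₖ = tₖ − tₖ₋₁`. -/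
theorem piecewise_affine_projection_penalty (T : ℝ) (N : ℕ) (hN : 0 < N)
    (t : ℕ → ℝ) (ht0 : t 0 = 0) (htN : t N = T)
    (hmono : ∀ k < N, t k < t (k + 1))
    (w v Qv : ℝ → ℝ)
    (hwc : ContinuousOn w (Set.Icc 0 T)) (hvc : ContinuousOn v (Set.Icc 0 T))
    (hwaff : ∀ k < N, ∃ c d : ℝ, ∀ s ∈ Set.Icc (t k) (t (k + 1)), w s = c + d * s)
    (hvaff : ∀ k < N, ∃ c d : ℝ, ∀ s ∈ Set.Icc (t k) (t (k + 1)), v s = c + d * s)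
    (hQ : ∀ k < N, ∀ s ∈ Set.Ioo (t k) (t (k + 1)),
        Qv s = (1 / (t (k + 1) - t k)) * ∫ r in (t k)..(t (k + 1)), v r) :
    (∫ s in (0 : ℝ)..T, w s * Qv s)
      = (∫ s in (0 : ℝ)..T, w s * v s)
        - ∑ k ∈ Finset.range N, ((t (k + 1) - t k) ^ 2 / 12) *
            ∫ s in (t k)..(t (k + 1)), deriv w s * deriv v s :=
  piecewise_affine_projection_penalty_general T N t ht0 htN hmono w v Qv hwaff hvaff hQ
end

section
/- Let 0 = t₀ < t₁ < ⋯ < t_N = T with h_k = t_k − t_{k−1}. Let a, b : [0,1] × [0,T] → ℝ be functions such that for each k there exist square-integrable functions α_k, β_k, γ_k, δ_k : (0,1) → ℝ with a(x,t) = α_k(x) + β_k(x)·t and b(x,t) = γ_k(x) + δ_k(x)·t for all x ∈ (0,1) and t ∈ [t_{k−1}, t_k]. Define (Πb)(x,t) := (1/h_k)∫_{t_{k−1}}^{t_k} b(x,s) ds for t ∈ (t_{k−1}, t_k). Then ∫₀¹ ∫₀ᵀ a(x,t)·(Πb)(x,t) dt dx = ∫₀¹ ∫₀ᵀ a(x,t)·b(x,t)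 dt dx − Σ_{k=1}^{N} (h_k²/12)·∫₀¹ ∫_{t_{k−1}}^{t_k} β_k(x)·δ_k(x) dt dx. -/
/-!
On a time interval `[p, q]` with midpoint `m`, write the affine function `g` as
`ḡ + D (s - m)`, where `ḡ` is its mean, the value of `G = Πg` there. Then
`f G - f g = -f · D (s - m)` and only the slope part
`B (s - m)` of `f` survives integration, so
`∫ f G = ∫ f g - B D ∫ (s - m)² = ∫ f g - B D (q - p)³ / 12`.
Summing over the partition gives the identity for each fixed `x`; integrating in `x` is legitimate
because all spatial coefficients are products of two `L²` functions, hence integrable.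
-/

open MeasureTheory Set

theorem integral_affine_mul_affine_s6 (p q A B C D : ℝ) :
    ∫ s in p..q, (A + B * s) * (C + D * s) =
      A * C * (q - p) + (A * D + B * C) * (q ^ 2 - p ^ 2) / 2 + B * D * (q ^ 3 - p ^ 3) / 3 := by
  have hF : ∀ s : ℝ, HasDerivAt
      (fun s => A * C * s + (A * D + B * C) * s ^ 2 / 2 + B * D * s ^ 3 / 3)
      ((A + B * s) * (C + D * s)) s := fun s =>
    ((((hasDerivAt_id' s).const_mul (A * C)).add
      (((hasDerivAt_pow 2 s).const_mul (A * D + B * C)).div_const 2)).add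
      (((hasDerivAt_pow 3 s).const_mul (B * D)).div_const 3)).congr_deriv (by push_cast; ring)
  rw [intervalIntegral.integral_eq_sub_of_hasDerivAt (fun s _ => hF s)
    ((by fun_prop : Continuous _).intervalIntegrable _ _)]
  ring

theorem integral_affine_s6 (p q C D : ℝ) :
    ∫ s in p..q, (C + D * s) = C * (q - p) + D * (q ^ 2 - p ^ 2) / 2 := by
  simpa using integral_affine_mul_affine_s6 p q 1 0 C D

section AffineOnIoo

variable {p q A B C D : ℝ} {f g : ℝ → ℝ}

theorem intervalIntegrable_mul_of_eqOn_affine (hpq : p ≤ q)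
    (hf : EqOn f (fun s => A + B * s) (Ioo p q)) (hg : EqOn g (fun s => C + D * s) (Ioo p q)) :
    IntervalIntegrable (fun s => f s * g s) volume p q :=
  ((by fun_prop : Continuous fun s => (A + B * s) * (C + D * s)).intervalIntegrable p q).congr_uIoo
    (by rw [uIoo_of_le hpq]; exact fun s hs => by simp only [hf hs, hg hs])

theorem integral_mul_of_eqOn_affine (hpq : p ≤ q)
    (hf : EqOn f (fun s => A + B * s) (Ioo p q)) (hg : EqOn g (fun s => C + D * s) (Ioo p q)) :
    ∫ s in p..q, f s * g s =
      A * C * (q - p) + (A * D + B * C) * (q ^ 2 - p ^ 2) / 2 + B * D * (q ^ 3 - p ^ 3) / 3 := by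
  rw [← integral_affine_mul_affine_s6]
  exact intervalIntegral.integral_congr_Ioo_of_le hpq fun s hs => by
    simp only [hf hs, hg hs]

theorem integral_mul_mean_of_eqOn_affine {G : ℝ → ℝ} (hpq : p < q)
    (hf : EqOn f (fun s => A + B * s) (Ioo p q)) (hg : EqOn g (fun s => C + D * s) (Ioo p q))
    (hG : EqOn G (fun _ => 1 / (q - p) * ∫ r in p..q, g r) (Ioo p q)) :
    ∫ s in p..q, f s * G s =
      (∫ s in p..q, f s * g s) - (q - p) ^ 2 / 12 * ∫ _ in p..q, B * D := by
  have hmean : ∫ r in p..q, g r = C * (q - p) + D * (q ^ 2 - p ^ 2) / 2 := by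
    rw [← integral_affine_s6]
    exact intervalIntegral.integral_congr_Ioo_of_le hpq.le hg
  have hGc : EqOn G (fun s => (1 / (q - p) * ∫ r in p..q, g r) + 0 * s) (Ioo p q) :=
    fun s hs => by simp [hG hs]
  rw [integral_mul_of_eqOn_affine hpq.le hf hGc, integral_mul_of_eqOn_affine hpq.le hf hg,
    intervalIntegral.integral_const, smul_eq_mul, hmean]
  have : q - p ≠ 0 := sub_ne_zero.mpr hpq.ne'
  field_simp
  ring

end AffineOnIoo

section Partition

variable {N : ℕ} {t A B C D : ℕ → ℝ} {f g : ℝ → ℝ}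

theorem integral_mul_eq_sum_of_eqOn_affine (ht : ∀ k < N, t k ≤ t (k + 1))
    (hf : ∀ k < N, EqOn f (fun s => A k + B k * s) (Ioo (t k) (t (k + 1))))
    (hg : ∀ k < N, EqOn g (fun s => C k + D k * s) (Ioo (t k) (t (k + 1)))) :
    ∫ s in t 0..t N, f s * g s = ∑ k ∈ Finset.range N, ∫ s in t k..t (k + 1), f s * g s :=
  (intervalIntegral.sum_integral_adjacent_intervals fun k hk =>
    intervalIntegrable_mul_of_eqOn_affine (ht k hk) (hf k hk) (hg k hk)).symm

theorem integral_mul_piecewiseMean_of_eqOn_affine {G : ℝ → ℝ}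
    (ht : ∀ k < N, t k < t (k + 1))
    (hf : ∀ k < N, EqOn f (fun s => A k + B k * s) (Ioo (t k) (t (k + 1))))
    (hg : ∀ k < N, EqOn g (fun s => C k + D k * s) (Ioo (t k) (t (k + 1))))
    (hG : ∀ k < N, EqOn G (fun _ => 1 / (t (k + 1) - t k) * ∫ r in t k..t (k + 1), g r)
      (Ioo (t k) (t (k + 1)))) :
    ∫ s in t 0..t N, f s * G s = (∫ s in t 0..t N, f s * g s) - ∑ k ∈ Finset.range N,
      (t (k + 1) - t k) ^ 2 / 12 * ∫ _ in t k..t (k + 1), B k * D k := by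
  have hGc : ∀ k < N,
      EqOn G (fun s => (1 / (t (k + 1) - t k) * ∫ r in t k..t (k + 1), g r) + 0 * s)
        (Ioo (t k) (t (k + 1))) := fun k hk s hs => by simp [hG k hk hs]
  have ht' : ∀ k < N, t k ≤ t (k + 1) := fun k hk => (ht k hk).le
  rw [integral_mul_eq_sum_of_eqOn_affine ht' hf hGc, integral_mul_eq_sum_of_eqOn_affine ht' hf hg,
    ← Finset.sum_sub_distrib]
  refine Finset.sum_congr rfl fun k hk => ?_
  have hk := Finset.mem_range.mp hk
  exact integral_mul_mean_of_eqOn_affine (ht k hk) (hf k hk) (hg k hk) (hG k hk)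

end Partition

theorem integrable_integral_mul_of_eqOn_affine {X : Type*} [MeasurableSpace X] {μ : Measure X}
    {p q : ℝ} (hpq : p ≤ q) {a b : X → ℝ → ℝ} {α β γ δ : X → ℝ}
    (hα : MemLp α 2 μ) (hβ : MemLp β 2 μ) (hγ : MemLp γ 2 μ) (hδ : MemLp δ 2 μ)
    (ha : ∀ᵐ x ∂μ, EqOn (a x) (fun s => α x + β x * s) (Ioo p q))
    (hb : ∀ᵐ x ∂μ, EqOn (b x) (fun s => γ x + δ x * s) (Ioo p q)) :
    Integrable (fun x => ∫ s in p..q, a x s * b x s) μ := by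
  have hpoly : Integrable (fun x => α x * γ x * (q - p) +
      (α x * δ x + β x * γ x) * (q ^ 2 - p ^ 2) / 2 + β x * δ x * (q ^ 3 - p ^ 3) / 3) μ :=
    (((hα.integrable_mul hγ).mul_const _).add
      ((((hα.integrable_mul hδ).add (hβ.integrable_mul hγ)).mul_const _).div_const _)).add
      (((hβ.integrable_mul hδ).mul_const _).div_const _)
  refine hpoly.congr ?_
  filter_upwards [ha, hb] with x hax hbx
  exact (integral_mul_of_eqOn_affine hpq hax hbx).symm

theorem integrable_integral_mul_of_piecewise_eqOn_affine {X : Type*} [MeasurableSpace X]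
    {μ : Measure X} {N : ℕ} {t : ℕ → ℝ} (ht : ∀ k < N, t k ≤ t (k + 1))
    {a b : X → ℝ → ℝ} {α β γ δ : ℕ → X → ℝ}
    (hα : ∀ k < N, MemLp (α k) 2 μ) (hβ : ∀ k < N, MemLp (β k) 2 μ)
    (hγ : ∀ k < N, MemLp (γ k) 2 μ) (hδ : ∀ k < N, MemLp (δ k) 2 μ)
    (ha : ∀ᵐ x ∂μ, ∀ k < N,
      EqOn (a x) (fun s => α k x + β k x * s) (Ioo (t k) (t (k + 1))))
    (hb : ∀ᵐ x ∂μ, ∀ k < N,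
      EqOn (b x) (fun s => γ k x + δ k x * s) (Ioo (t k) (t (k + 1)))) :
    Integrable (fun x => ∫ s in t 0..t N, a x s * b x s) μ := by
  refine (integrable_finsetSum (Finset.range N)
    (f := fun k x => ∫ s in t k..t (k + 1), a x s * b x s) fun k hk => ?_).congr ?_
  · have hk := Finset.mem_range.mp hk
    exact integrable_integral_mul_of_eqOn_affine (ht k hk) (hα k hk) (hβ k hk) (hγ k hk)
      (hδ k hk) (ha.mono fun x hx => hx k hk) (hb.mono fun x hx => hx k hk)
  · filter_upwards [ha, hb] with x hax hbx
    exact (integral_mul_eq_sum_of_eqOn_affine ht hax hbx).symm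

theorem tensor_affine_projection_penalty_general (T : ℝ) (N : ℕ)
    (t : ℕ → ℝ) (ht0 : t 0 = 0) (htN : t N = T)
    (hmono : ∀ k < N, t k < t (k + 1))
    (a b Pb : ℝ → ℝ → ℝ) (α β γ δ : ℕ → ℝ → ℝ)
    (hα : ∀ k, MemLp (α k) 2 (volume.restrict (Set.Ioo (0 : ℝ) 1)))
    (hβ : ∀ k, MemLp (β k) 2 (volume.restrict (Set.Ioo (0 : ℝ) 1)))
    (hγ : ∀ k, MemLp (γ k) 2 (volume.restrict (Set.Ioo (0 : ℝ) 1)))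
    (hδ : ∀ k, MemLp (δ k) 2 (volume.restrict (Set.Ioo (0 : ℝ) 1)))
    (ha : ∀ k < N, ∀ x ∈ Set.Ioo (0 : ℝ) 1, ∀ s ∈ Set.Icc (t k) (t (k + 1)),
        a x s = α k x + β k x * s)
    (hb : ∀ k < N, ∀ x ∈ Set.Ioo (0 : ℝ) 1, ∀ s ∈ Set.Icc (t k) (t (k + 1)),
        b x s = γ k x + δ k x * s)
    (hP : ∀ k < N, ∀ x : ℝ, ∀ s ∈ Set.Ioo (t k) (t (k + 1)),
        Pb x s = (1 / (t (k + 1) - t k)) * ∫ r in (t k)..(t (k + 1)), b x r) :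
    (∫ x in (0 : ℝ)..1, ∫ s in (0 : ℝ)..T, a x s * Pb x s)
      = (∫ x in (0 : ℝ)..1, ∫ s in (0 : ℝ)..T, a x s * b x s)
        - ∑ k ∈ Finset.range N, ((t (k + 1) - t k) ^ 2 / 12) *
            ∫ x in (0 : ℝ)..1, ∫ s in (t k)..(t (k + 1)), β k x * δ k x := by
  have ha' : ∀ x ∈ Ioo (0 : ℝ) 1, ∀ k < N,
      EqOn (a x) (fun s => α k x + β k x * s) (Ioo (t k) (t (k + 1))) :=
    fun x hx k hk => EqOn.mono Ioo_subset_Icc_self (ha k hk x hx)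
  have hb' : ∀ x ∈ Ioo (0 : ℝ) 1, ∀ k < N,
      EqOn (b x) (fun s => γ k x + δ k x * s) (Ioo (t k) (t (k + 1))) :=
    fun x hx k hk => EqOn.mono Ioo_subset_Icc_self (hb k hk x hx)
  have hab : Integrable (fun x => ∫ s in (0 : ℝ)..T, a x s * b x s)
      (volume.restrict (Ioo 0 1)) := by
    simpa only [ht0, htN] using integrable_integral_mul_of_piecewise_eqOn_affine
      (fun k hk => (hmono k hk).le) (fun k _ => hα k) (fun k _ => hβ k) (fun k _ => hγ k)
      (fun k _ => hδ k) (ae_restrict_of_forall_mem measurableSet_Ioo ha')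
      (ae_restrict_of_forall_mem measurableSet_Ioo hb')
  have hβδ : ∀ k ∈ Finset.range N,
      IntegrableOn (fun x => ∫ _ in t k..t (k + 1), β k x * δ k x) (Ioo 0 1) := fun k _ => by
    simp only [intervalIntegral.integral_const, smul_eq_mul]
    exact ((hβ k).integrable_mul (hδ k)).const_mul _
  simp only [intervalIntegral.integral_of_le zero_le_one, integral_Ioc_eq_integral_Ioo]
  rw [setIntegral_congr_fun measurableSet_Ioo fun x hx => by
      simpa only [ht0, htN] using
        integral_mul_piecewiseMean_of_eqOn_affine hmono (ha' x hx) (hb' x hx)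
          (fun k hk => hP k hk x),
    integral_sub hab (integrable_finsetSum _ fun k hk => (hβδ k hk).const_mul _),
    integral_finsetSum _ fun k hk => (hβδ k hk).const_mul _]
  simp only [integral_const_mul]

/-- For functions `a(x,t) = αₖ(x) + βₖ(x)t`, `b(x,t) = γₖ(x) + δₖ(x)t` on `(0,1) × [tₖ₋₁,tₖ]`
(tensor products of square-integrable functions in space and affine functions in time on each
time subinterval of a partition `0 = t₀ < ⋯ < t_N = T`), and `Πb` the time-wise piecewise mean
of `b`:
`∫₀¹∫₀ᵀ a·Πb = ∫₀¹∫₀ᵀ a·b − Σₖ (hₖ²/12)·∫₀¹∫ βₖ·δₖ`. -/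
theorem tensor_affine_projection_penalty (T : ℝ) (N : ℕ) (hN : 0 < N)
    (t : ℕ → ℝ) (ht0 : t 0 = 0) (htN : t N = T)
    (hmono : ∀ k < N, t k < t (k + 1))
    (a b Pb : ℝ → ℝ → ℝ) (α β γ δ : ℕ → ℝ → ℝ)
    (hα : ∀ k, MemLp (α k) 2 (volume.restrict (Set.Ioo (0 : ℝ) 1)))
    (hβ : ∀ k, MemLp (β k) 2 (volume.restrict (Set.Ioo (0 : ℝ) 1)))
    (hγ : ∀ k, MemLp (γ k) 2 (volume.restrict (Set.Ioo (0 : ℝ) 1)))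
    (hδ : ∀ k, MemLp (δ k) 2 (volume.restrict (Set.Ioo (0 : ℝ) 1)))
    (ha : ∀ k < N, ∀ x ∈ Set.Ioo (0 : ℝ) 1, ∀ s ∈ Set.Icc (t k) (t (k + 1)),
        a x s = α k x + β k x * s)
    (hb : ∀ k < N, ∀ x ∈ Set.Ioo (0 : ℝ) 1, ∀ s ∈ Set.Icc (t k) (t (k + 1)),
        b x s = γ k x + δ k x * s)
    (hP : ∀ k < N, ∀ x : ℝ, ∀ s ∈ Set.Ioo (t k) (t (k + 1)),
        Pb x s = (1 / (t (k + 1) - t k)) * ∫ r in (t k)..(t (k + 1)), b x r) :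
    (∫ x in (0 : ℝ)..1, ∫ s in (0 : ℝ)..T, a x s * Pb x s)
      = (∫ x in (0 : ℝ)..1, ∫ s in (0 : ℝ)..T, a x s * b x s)
        - ∑ k ∈ Finset.range N, ((t (k + 1) - t k) ^ 2 / 12) *
            ∫ x in (0 : ℝ)..1, ∫ s in (t k)..(t (k + 1)), β k x * δ k x :=
  tensor_affine_projection_penalty_general T N t ht0 htN hmono a b Pb α β γ δ hα hβ hγ hδ ha hb hP
end

section
/- Let Ψ : ℝ → ℝ be the bump function Ψ(s) = exp(1 + 1/(s²−1)) for |s| < 1 and Ψ(s) = 0 for |s| ≥ 1, and define u_L : ℝ × ℝ → ℝ by u_L(x,t) = Ψ(5(x−t)−1) − (1/3)Ψ(5(x+t)−4) − (1/3)Ψ(5(x−t)+4) − (8/9)Ψ(5(x+t)−13/2). Then u_L satisfies the wave equation with unit speed, ∂ₜₜu_L(x,t) = ∂ₓₓu_L(x,t), for all (x,t) ∈ ℝ²; moreover for every x ∈ [0,1/2] one has u_L(x,0) = Ψ(5x−1) and ∂ₜu_L(x,0) = −5Ψ′(5x−1). -/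
/-!
`u_L(x,t) = F(x - t) + G(x + t)` with `F z = Ψ(5z - 1) - Ψ(5z + 4)/3` and
`G z = -Ψ(5z - 4)/3 - 8Ψ(5z - 13/2)/9`, both smooth, so d'Alembert's formula gives the wave
equation. For `x ∈ [0, 1/2]` and `|t| < 1/10` the bumps `Ψ(5(x+t) - 4)`, `Ψ(5(x-t) + 4)` and
`Ψ(5(x+t) - 13/2)` vanish, so near `t = 0` the function `u_L(x, ·)` is `Ψ(5(x - ·) - 1)`,
which gives both initial conditions.
-/

/-- The bump function `Ψ(s) = exp(1 + 1/(s²−1))` on `(−1,1)`, extended by zero. -/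
noncomputable def Psi (s : ℝ) : ℝ :=
  if |s| < 1 then Real.exp (1 + 1 / (s ^ 2 - 1)) else 0

theorem Psi_eq_exp_one_mul_expNegInvGlue (s : ℝ) :
    Psi s = Real.exp 1 * expNegInvGlue (1 - s ^ 2) := by
  unfold Psi expNegInvGlue
  split_ifs with hs hs' hs'
  · nlinarith [abs_lt.mp hs]
  · rw [← Real.exp_add, one_div, ← neg_sub, inv_neg, sub_eq_add_neg]
  · simp
  · nlinarith [sq_abs s, not_lt.mp hs]

theorem contDiff_Psi {n : ℕ∞} : ContDiff ℝ n Psi := by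
  simp_rw [funext Psi_eq_exp_one_mul_expNegInvGlue]
  exact contDiff_const.mul (expNegInvGlue.contDiff.comp (by fun_prop))

theorem Psi_eq_zero_of_one_le_abs {s : ℝ} (hs : 1 ≤ |s|) : Psi s = 0 := by
  simp [Psi, not_lt.2 hs]

section dAlembert

variable {F G : ℝ → ℝ}

theorem deriv_deriv_dAlembert_time (hF : ContDiff ℝ 2 F) (hG : ContDiff ℝ 2 G) (x t : ℝ) :
    deriv (deriv fun s => F (x - s) + G (x + s)) t
      = deriv (deriv F) (x - t) + deriv (deriv G) (x + t) := by
  have hF1 : Differentiable ℝ F := hF.differentiable (by norm_num)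
  have hG1 : Differentiable ℝ G := hG.differentiable (by norm_num)
  have hF2 := hF.differentiable_deriv_two
  have hG2 := hG.differentiable_deriv_two
  have h1 : deriv (fun s => F (x - s) + G (x + s))
      = fun s => -deriv F (x - s) + deriv G (x + s) := by
    funext s
    rw [deriv_fun_add (by fun_prop) (by fun_prop), deriv_comp_const_sub, deriv_comp_const_add]
  rw [h1, deriv_fun_add (by fun_prop) (by fun_prop), deriv.fun_neg, deriv_comp_const_sub,
    deriv_comp_const_add, neg_neg]

theorem deriv_deriv_dAlembert_space (hF : ContDiff ℝ 2 F) (hG : ContDiff ℝ 2 G) (x t : ℝ) :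
    deriv (deriv fun y => F (y - t) + G (y + t)) x
      = deriv (deriv F) (x - t) + deriv (deriv G) (x + t) := by
  have hF1 : Differentiable ℝ F := hF.differentiable (by norm_num)
  have hG1 : Differentiable ℝ G := hG.differentiable (by norm_num)
  have hF2 := hF.differentiable_deriv_two
  have hG2 := hG.differentiable_deriv_two
  have h1 : deriv (fun y => F (y - t) + G (y + t))
      = fun y => deriv F (y - t) + deriv G (y + t) := by
    funext y
    rw [deriv_fun_add (by fun_prop) (by fun_prop), deriv_comp_sub_const, deriv_comp_add_const]
  rw [h1, deriv_fun_add (by fun_prop) (by fun_prop), deriv_comp_sub_const, deriv_comp_add_const]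

theorem dAlembert_wave_eq (hF : ContDiff ℝ 2 F) (hG : ContDiff ℝ 2 G) (x t : ℝ) :
    deriv (deriv fun s => F (x - s) + G (x + s)) t
      = deriv (deriv fun y => F (y - t) + G (y + t)) x := by
  rw [deriv_deriv_dAlembert_time hF hG, deriv_deriv_dAlembert_space hF hG]

end dAlembert

/-- Left part of the exact solution of the transmission problem with piecewise-constant
velocity: `u_L` solves the unit-speed wave equation on ℝ², and on `[0,1/2]` it has initial
data `u_L(x,0) = Ψ(5x−1)` and `∂ₜu_L(x,0) = −5Ψ′(5x−1)`. -/
theorem transmission_left_solution (uL : ℝ → ℝ → ℝ)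
    (huL : ∀ x t, uL x t =
      Psi (5 * (x - t) - 1) - (1 / 3) * Psi (5 * (x + t) - 4)
        - (1 / 3) * Psi (5 * (x - t) + 4) - (8 / 9) * Psi (5 * (x + t) - 13 / 2)) :
    (∀ x t : ℝ, deriv (deriv (fun s => uL x s)) t = deriv (deriv (fun y => uL y t)) x) ∧
    (∀ x ∈ Set.Icc (0 : ℝ) (1 / 2),
      uL x 0 = Psi (5 * x - 1) ∧
      deriv (fun s => uL x s) 0 = -5 * deriv Psi (5 * x - 1)) := by
  have hPsi : ContDiff ℝ 2 Psi := contDiff_Psi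
  obtain ⟨F, G, hF, hG, hu⟩ : ∃ F G : ℝ → ℝ, ContDiff ℝ 2 F ∧ ContDiff ℝ 2 G ∧
      ∀ x t, uL x t = F (x - t) + G (x + t) :=
    ⟨fun z => Psi (5 * z - 1) - 1 / 3 * Psi (5 * z + 4),
      fun z => -(1 / 3) * Psi (5 * z - 4) - 8 / 9 * Psi (5 * z - 13 / 2),
      by fun_prop, by fun_prop, fun x t => by rw [huL]; ring⟩
  refine ⟨fun x t => by simpa only [hu] using dAlembert_wave_eq hF hG x t, fun x ⟨hx0, hx1⟩ => ?_⟩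
  have hnear : ∀ s, |s| < 1 / 10 → uL x s = Psi (5 * (x - s) - 1) := by
    intro s hs
    obtain ⟨hs0, hs1⟩ := abs_lt.mp hs
    rw [huL,
      Psi_eq_zero_of_one_le_abs (s := 5 * (x + s) - 4) (le_abs.mpr (Or.inr (by linarith))),
      Psi_eq_zero_of_one_le_abs (s := 5 * (x - s) + 4) (le_abs.mpr (Or.inl (by linarith))),
      Psi_eq_zero_of_one_le_abs (s := 5 * (x + s) - 13 / 2) (le_abs.mpr (Or.inr (by linarith)))]
    ring
  have hev : (fun s => uL x s) =ᶠ[nhds 0] fun s => Psi (5 * (x - s) - 1) :=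
    Filter.eventually_of_mem ((isOpen_lt continuous_abs continuous_const).mem_nhds (by norm_num))
      hnear
  have hderiv : HasDerivAt (fun s => Psi (5 * (x - s) - 1)) (-5 * deriv Psi (5 * x - 1)) 0 := by
    have hchain := (hPsi.differentiable (by norm_num) _).hasDerivAt.comp (0 : ℝ)
      ((((hasDerivAt_id (0 : ℝ)).const_sub x).const_mul 5).sub_const 1)
    simpa [Function.comp_def, mul_comm] using hchain
  exact ⟨by simpa using hnear 0 (by norm_num), hev.deriv_eq.trans hderiv.deriv⟩
end
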